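/- In ℤ[[u]] one has the following identities for the specializations at q = 1: (1-u²)·P₀(1,u) = 1; (1-u)·P₁(1,u) = u; (1-u²)·P₂(1,u) = u; (1-u)(1-u²)·P₃(1,u) = u²; (1-u)(1-u²)·P₄(1,u) = u²; and (1-u)(1-u²)·P₅(1,u) = u³. -/

import Mathlib

/-!
At `q = 1` all powers of `q` in the recursion disappear and it reads
`p_{s,r} = p_{s-3,r-3} + p_{s-4,r}` for even `s` and `p_{s,r} = p_{s-3,r-3} + p_{s-2,r}` for odd `s`
(the first term only for `r ≥ 3`). On generating series this says
`(1-u²)P_r = u P_{r-3}` for even `r ≥ 4` and `(1-u)P_r = u² P_{r-3}` for odd `r ≥ 3`, while the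
initial values give `(1-u²)P₀ = 1`, `(1-u)P₁ = u` and `(1-u²)P₂ = u`. Multiplying the
recursions for `r = 3, 4, 5` by the remaining factor reduces them to these base cases.
-/

open scoped PowerSeries

/-- The polynomials `p_{s,r}(q) ∈ ℤ[q]` (the graded multiplicities
`[D(2,sω) : D(3,rω)]_q`): `p_{0,0} = p_{1,1} = p_{2,2} = 1`; `p_{s,r} = 0` whenever
`r > s`, or `s - r` is odd, or `s ≤ 2` and `(s,r) ∉ {(0,0),(1,1),(2,2)}`; and for
`s ≥ 3` with `r ≤ s` and `s - r` even, writing `s = 2s₁ + s₀` with `s₀ ∈ {0,1}`,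
`p_{s,r} = q^{(s-r)/2} p_{s-3,r-3} + q^{(s₁+s₀-1)(2-s₀)} p_{s-4+2s₀,r}` if `r ≥ 3`, and
`p_{s,r} = q^{(s₁+s₀-1)(2-s₀)} p_{s-4+2s₀,r}` if `0 ≤ r ≤ 2`. -/
noncomputable def pp : ℕ → ℕ → Polynomial ℤ
  | 0, r => if r = 0 then 1 else 0
  | 1, r => if r = 1 then 1 else 0
  | 2, r => if r = 2 then 1 else 0
  | (s + 3), r =>
    if (s + 3) < r ∨ (s + 3) % 2 ≠ r % 2 then 0
    else
      (if 3 ≤ r then Polynomial.X ^ (((s + 3) - r) / 2) * pp s (r - 3) else 0)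
        + Polynomial.X ^ (((s + 3) / 2 + (s + 3) % 2 - 1) * (2 - (s + 3) % 2))
            * pp ((s + 3) + 2 * ((s + 3) % 2) - 4) r
  termination_by s _ => s
  decreasing_by
  · omega
  · omega

/-- The generating series `P_m(q,u)`: for `m` even, `P_m(q,u) = Σ_{s≥0} p_{2s,m} u^s`;
for `m` odd, `P_m(q,u) = Σ_{s≥0} p_{2s+1,m} u^{s+1}`.  A formal power series in `u` with
coefficients in `ℤ[q]`. -/
noncomputable def Pser (m : ℕ) : PowerSeries (Polynomial ℤ) :=
  PowerSeries.mk fun n =>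
    if m % 2 = 0 then pp (2 * n) m else if n = 0 then 0 else pp (2 * n - 1) m

/-- `thetaSubst a c` is the substituted partial theta series `Θ(a, c·u²) ∈ ℤ[q]⟦u⟧`,
i.e. `Σ_{s≥0} a^{s²} c^s u^{2s}`, where `Θ(q,u) = Σ_{s≥0} q^{s²}u^s`. -/
noncomputable def thetaSubst (a c : Polynomial ℤ) : PowerSeries (Polynomial ℤ) :=
  PowerSeries.mk fun n => if n % 2 = 0 then a ^ ((n / 2) ^ 2) * c ^ (n / 2) else 0

/-- `P_m(1,u) ∈ ℤ⟦u⟧`, obtained from `P_m(q,u)` by evaluating each coefficient at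
`q = 1`. -/
noncomputable def Pone (m : ℕ) : PowerSeries ℤ :=
  PowerSeries.map (Polynomial.evalRingHom (1 : ℤ)) (Pser m)

open PowerSeries

lemma pp_eq_zero_of_lt {s r : ℕ} (h : s < r) : pp s r = 0 := by
  match s with
  | 0 | 1 | 2 => simp only [pp]; rw [if_neg (by omega)]
  | s + 3 => rw [pp, if_pos (Or.inl h)]

lemma eval_one_pp_add_three {s r : ℕ} (hpar : (s + 3) % 2 = r % 2) :
    (pp (s + 3) r).eval 1 =
      (if 3 ≤ r then (pp s (r - 3)).eval 1 else 0)
        + (pp (s + 3 + 2 * ((s + 3) % 2) - 4) r).eval 1 := by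
  rcases lt_or_ge (s + 3) r with hlt | hle
  · rw [pp_eq_zero_of_lt hlt, pp_eq_zero_of_lt (by omega : s < r - 3),
      pp_eq_zero_of_lt (by omega : s + 3 + 2 * ((s + 3) % 2) - 4 < r)]
    simp
  · rw [pp, if_neg (by omega)]
    split_ifs <;> simp

lemma eval_one_pp_even {r : ℕ} (hr : Even r) (n : ℕ) :
    (pp (2 * n + 4) r).eval 1 =
      (if 3 ≤ r then (pp (2 * n + 1) (r - 3)).eval 1 else 0) + (pp (2 * n) r).eval 1 := by
  have hpar : (2 * n + 1 + 3) % 2 = r % 2 := by rw [Nat.even_iff] at hr; omega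
  rw [show 2 * n + 4 = 2 * n + 1 + 3 from rfl, eval_one_pp_add_three hpar]
  congr 4
  omega

lemma eval_one_pp_odd {r : ℕ} (hr : Odd r) (n : ℕ) :
    (pp (2 * n + 3) r).eval 1 =
      (if 3 ≤ r then (pp (2 * n) (r - 3)).eval 1 else 0) + (pp (2 * n + 1) r).eval 1 := by
  have hpar : (2 * n + 3) % 2 = r % 2 := by rw [Nat.odd_iff] at hr; omega
  rw [eval_one_pp_add_three hpar]
  congr 4
  omega

lemma coeff_Pone_of_even {m : ℕ} (hm : Even m) (n : ℕ) :
    coeff n (Pone m) = (pp (2 * n) m).eval 1 := by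
  simp [Pone, Pser, coeff_map, Nat.even_iff.mp hm]

lemma coeff_zero_Pone_of_odd {m : ℕ} (hm : Odd m) : coeff 0 (Pone m) = 0 := by
  simp [Pone, Pser, coeff_map, Nat.odd_iff.mp hm]

lemma coeff_succ_Pone_of_odd {m : ℕ} (hm : Odd m) (n : ℕ) :
    coeff (n + 1) (Pone m) = (pp (2 * n + 1) m).eval 1 := by
  simp [Pone, Pser, coeff_map, Nat.odd_iff.mp hm, Nat.mul_add]

lemma coeff_add_two_one_sub_X_sq_mul_Pone {r : ℕ} (hr : Even r) (n : ℕ) :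
    coeff (n + 2) ((1 - X ^ 2) * Pone r) =
      if 3 ≤ r then (pp (2 * n + 1) (r - 3)).eval 1 else 0 := by
  rw [sub_mul, one_mul, map_sub, coeff_X_pow_mul, coeff_Pone_of_even hr,
    coeff_Pone_of_even hr, Nat.mul_add, eval_one_pp_even hr]
  ring

lemma coeff_add_two_one_sub_X_mul_Pone {r : ℕ} (hr : Odd r) (n : ℕ) :
    coeff (n + 2) ((1 - X) * Pone r) = if 3 ≤ r then (pp (2 * n) (r - 3)).eval 1 else 0 := by
  rw [sub_mul, one_mul, map_sub, coeff_succ_X_mul, coeff_succ_Pone_of_odd hr,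
    coeff_succ_Pone_of_odd hr, show 2 * (n + 1) + 1 = 2 * n + 3 by ring, eval_one_pp_odd hr]
  ring

lemma one_sub_X_sq_mul_Pone_zero : (1 - X ^ 2) * Pone 0 = 1 := by
  ext (_ | _ | n)
  · simp [-coeff_zero_eq_constantCoeff, sub_mul, coeff_X_pow_mul', coeff_Pone_of_even, pp]
  · simp [-coeff_zero_eq_constantCoeff, sub_mul, coeff_X_pow_mul', coeff_Pone_of_even, pp,
      coeff_one]
  · rw [coeff_add_two_one_sub_X_sq_mul_Pone Even.zero, coeff_one]
    simp

lemma one_sub_X_mul_Pone_one : (1 - X) * Pone 1 = X := by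
  ext (_ | _ | n)
  · simp [-coeff_zero_eq_constantCoeff, sub_mul, coeff_zero_X_mul, coeff_zero_Pone_of_odd]
  · simp [-coeff_zero_eq_constantCoeff, sub_mul, coeff_succ_Pone_of_odd, coeff_zero_Pone_of_odd,
      pp]
  · rw [coeff_add_two_one_sub_X_mul_Pone odd_one, coeff_X]
    simp

lemma one_sub_X_sq_mul_Pone_two : (1 - X ^ 2) * Pone 2 = X := by
  ext (_ | _ | n)
  · simp [-coeff_zero_eq_constantCoeff, sub_mul, coeff_X_pow_mul', coeff_Pone_of_even, pp]
  · simp [-coeff_zero_eq_constantCoeff, sub_mul, coeff_X_pow_mul', coeff_Pone_of_even, pp]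
  · rw [coeff_add_two_one_sub_X_sq_mul_Pone even_two, coeff_X]
    simp

lemma one_sub_X_sq_mul_Pone_of_even {r : ℕ} (hr : Even r) (h3 : 3 ≤ r) :
    (1 - X ^ 2) * Pone r = X * Pone (r - 3) := by
  have hr3 : Odd (r - 3) := by
    rw [Nat.odd_iff]; rw [Nat.even_iff] at hr; omega
  ext (_ | _ | n)
  · simp [-coeff_zero_eq_constantCoeff, sub_mul, coeff_X_pow_mul', coeff_zero_X_mul,
      coeff_Pone_of_even hr, pp_eq_zero_of_lt (by omega : 0 < r)]
  · simp [-coeff_zero_eq_constantCoeff, sub_mul, coeff_X_pow_mul', coeff_Pone_of_even hr,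
      pp_eq_zero_of_lt (by omega : 2 < r), coeff_zero_Pone_of_odd hr3]
  · rw [coeff_add_two_one_sub_X_sq_mul_Pone hr, if_pos h3, coeff_succ_X_mul,
      coeff_succ_Pone_of_odd hr3]

lemma one_sub_X_mul_Pone_of_odd {r : ℕ} (hr : Odd r) (h3 : 3 ≤ r) :
    (1 - X) * Pone r = X ^ 2 * Pone (r - 3) := by
  have hr3 : Even (r - 3) := by
    rw [Nat.even_iff]; rw [Nat.odd_iff] at hr; omega
  ext (_ | _ | n)
  · simp [-coeff_zero_eq_constantCoeff, sub_mul, coeff_X_pow_mul', coeff_zero_X_mul,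
      coeff_zero_Pone_of_odd hr]
  · simp [-coeff_zero_eq_constantCoeff, sub_mul, coeff_X_pow_mul', coeff_succ_Pone_of_odd hr,
      coeff_zero_Pone_of_odd hr, pp_eq_zero_of_lt (by omega : 1 < r)]
  · rw [coeff_add_two_one_sub_X_mul_Pone hr, if_pos h3, coeff_X_pow_mul _ 2 n,
      coeff_Pone_of_even hr3]

/-- In `ℤ⟦u⟧`: `(1-u²)·P₀(1,u) = 1`; `(1-u)·P₁(1,u) = u`;
`(1-u²)·P₂(1,u) = u`; `(1-u)(1-u²)·P₃(1,u) = u²`; `(1-u)(1-u²)·P₄(1,u) = u²`;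
`(1-u)(1-u²)·P₅(1,u) = u³`. -/
theorem stmt17 :
    (1 - PowerSeries.X ^ 2) * Pone 0 = 1 ∧
    (1 - PowerSeries.X) * Pone 1 = PowerSeries.X ∧
    (1 - PowerSeries.X ^ 2) * Pone 2 = PowerSeries.X ∧
    (1 - PowerSeries.X) * (1 - PowerSeries.X ^ 2) * Pone 3 = PowerSeries.X ^ 2 ∧
    (1 - PowerSeries.X) * (1 - PowerSeries.X ^ 2) * Pone 4 = PowerSeries.X ^ 2 ∧
    (1 - PowerSeries.X) * (1 - PowerSeries.X ^ 2) * Pone 5 = PowerSeries.X ^ 3 := by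
  have h0 := one_sub_X_sq_mul_Pone_zero
  have h1 := one_sub_X_mul_Pone_one
  have h2 := one_sub_X_sq_mul_Pone_two
  have h3 : (1 - X) * Pone 3 = X ^ 2 * Pone 0 := one_sub_X_mul_Pone_of_odd (by decide) le_rfl
  have h4 : (1 - X ^ 2) * Pone 4 = X * Pone 1 :=
    one_sub_X_sq_mul_Pone_of_even (by decide) (by norm_num)
  have h5 : (1 - X) * Pone 5 = X ^ 2 * Pone 2 := one_sub_X_mul_Pone_of_odd (by decide) (by norm_num)
  refine ⟨h0, h1, h2, ?_, ?_, ?_⟩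
  · linear_combination (1 - X ^ 2) * h3 + X ^ 2 * h0
  · linear_combination (1 - X) * h4 + X * h1
  · linear_combination (1 - X ^ 2) * h5 + X ^ 2 * h2
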